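/- For w an injective word over [n-1] and q = (w, 1), the fiber f⁻¹(q) consists exactly of the words obtained from w by inserting the letter n into one of the (length(w)+1) possible positions; in particular |f⁻¹((w,1))| = length(w) + 1. -/

import Mathlib

/-! Writing a word that contains `n` as `s ++ n :: t` with `n ∉ s`, deleting `n` gives `s ++ t`
and reinserting it at position `s.length` gives the word back; conversely, deleting an inserted
letter that did not occur before undoes the insertion. So the fiber over `(w, 1)` is the image of
`i ↦ w.insertIdx i n` on `{0, …, length w}`, and this map is injective because `n ∉ w`. -/

/-- Injective words over the alphabet `{1, …, n}`. -/
def NWord (n : ℕ) : Type := {l : List ℕ // l.Nodup ∧ ∀ x ∈ l, 1 ≤ x ∧ x ≤ n}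

/-- Deletion of the letter `n` from an injective word over `{1, …, n}`. -/
def delTop (n : ℕ) (w : NWord n) : NWord (n - 1) :=
  ⟨w.val.erase n, by
    obtain ⟨hnd, hmem⟩ := w.prop
    refine ⟨hnd.erase n, fun x hx => ?_⟩
    rw [hnd.mem_erase_iff] at hx
    have := hmem x hx.2
    omega⟩

/-- The map `f : I_n → I_{n-1} × {0,1}`. -/
def injMap (n : ℕ) (w : NWord n) : NWord (n - 1) × Bool :=
  (delTop n w, decide (n ∈ w.val))

namespace List

variable {α : Type*} [DecidableEq α] {a : α}

theorem erase_insertIdx_of_notMem {l : List α} {i : ℕ} (ha : a ∉ l) (hi : i ≤ l.length) :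
    (l.insertIdx i a).erase a = l := by
  obtain ⟨s, t, rfl, -, hins⟩ := exists_of_modifyTailIdx (cons a) hi
  rw [insertIdx, hins, erase_append_right _ (fun hs => ha (mem_append_left t hs)),
    erase_cons_head]

theorem exists_eq_insertIdx_erase_of_mem {l : List α} (ha : a ∈ l) :
    ∃ i ≤ (l.erase a).length, l = (l.erase a).insertIdx i a := by
  obtain ⟨s, t, rfl, hs⟩ := eq_append_cons_of_mem ha
  rw [erase_append_right _ hs, erase_cons_head]
  exact ⟨s.length, by simp, (modifyTailIdx_add (cons a) 0 s t).symm⟩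

end List

namespace NWord

theorem val_injective {n : ℕ} : Function.Injective (Subtype.val : NWord n → List ℕ) :=
  Subtype.val_injective

theorem val_inj {n : ℕ} {u v : NWord n} : u.val = v.val ↔ u = v :=
  val_injective.eq_iff

theorem top_notMem {n : ℕ} (w : NWord (n - 1)) : n ∉ w.val := fun h => by
  have := w.prop.2 n h
  omega

theorem insertIdx_top_prop {n : ℕ} (hn : 1 ≤ n) (w : NWord (n - 1)) {i : ℕ}
    (hi : i ≤ w.val.length) :
    (w.val.insertIdx i n).Nodup ∧ ∀ x ∈ w.val.insertIdx i n, 1 ≤ x ∧ x ≤ n := by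
  have hperm := List.perm_insertIdx n w.val hi
  refine ⟨hperm.nodup_iff.mpr (List.nodup_cons.mpr ⟨top_notMem w, w.prop.1⟩), fun x hx => ?_⟩
  rcases List.mem_cons.mp (hperm.mem_iff.mp hx) with rfl | hx
  · exact ⟨hn, le_rfl⟩
  · have := w.prop.2 x hx
    omega

theorem injMap_eq_true_iff {n : ℕ} (u : NWord n) (v : NWord (n - 1)) :
    injMap n u = (v, true) ↔ u.val.erase n = v.val ∧ n ∈ u.val := by
  rw [injMap, Prod.mk.injEq, decide_eq_true_iff, ← val_inj]
  rfl

theorem injMap_eq_true_iff_insertIdx {n : ℕ} (u : NWord n) (w : NWord (n - 1)) :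
    injMap n u = (w, true) ↔ ∃ i ≤ w.val.length, u.val = w.val.insertIdx i n := by
  rw [injMap_eq_true_iff]
  constructor
  · rintro ⟨hdel, hmem⟩
    exact hdel ▸ List.exists_eq_insertIdx_erase_of_mem hmem
  · rintro ⟨i, hi, hu⟩
    exact hu ▸ ⟨List.erase_insertIdx_of_notMem (top_notMem w) hi,
      (List.mem_insertIdx hi).mpr (.inl rfl)⟩

theorem ncard_setOf_eq_insertIdx_top {n : ℕ} (hn : 1 ≤ n) (w : NWord (n - 1)) :
    {u : NWord n | ∃ i ≤ w.val.length, u.val = w.val.insertIdx i n}.ncard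
      = w.val.length + 1 := by
  have himage : Subtype.val '' {u : NWord n | ∃ i ≤ w.val.length, u.val = w.val.insertIdx i n}
      = (fun i => w.val.insertIdx i n) '' Set.Iic w.val.length := by
    ext l
    constructor
    · rintro ⟨u, ⟨i, hi, hu⟩, rfl⟩
      exact ⟨i, hi, hu.symm⟩
    · rintro ⟨i, hi, rfl⟩
      exact ⟨⟨_, insertIdx_top_prop hn w hi⟩, ⟨i, hi, rfl⟩, rfl⟩
  calc _ = (Subtype.val ''
          {u : NWord n | ∃ i ≤ w.val.length, u.val = w.val.insertIdx i n}).ncard :=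
        (Set.ncard_image_of_injective _ val_injective).symm
    _ = (Set.Iic w.val.length).ncard :=
        himage ▸ (List.injOn_insertIdx_index_of_notMem _ _ (top_notMem w)).ncard_image
    _ = w.val.length + 1 := Set.ncard_Iic_nat _

end NWord

/-- For an injective word `w` over `{1, …, n-1}`, the fiber `f⁻¹((w, 1))`
consists exactly of the words obtained from `w` by inserting the letter `n`
into one of the `length(w) + 1` possible positions; in particular it has
cardinality `length(w) + 1`. -/
theorem stmt_15 {n : ℕ} (hn : 1 ≤ n) (w : NWord (n - 1)) :
    {u : NWord n | injMap n u = (w, true)} =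
      {u : NWord n | ∃ i ≤ w.val.length, u.val = w.val.insertIdx i n} ∧
    Set.ncard {u : NWord n | injMap n u = (w, true)} = w.val.length + 1 := by
  have hfiber : {u : NWord n | injMap n u = (w, true)} =
      {u : NWord n | ∃ i ≤ w.val.length, u.val = w.val.insertIdx i n} :=
    Set.ext fun u => NWord.injMap_eq_true_iff_insertIdx u w
  exact ⟨hfiber, hfiber ▸ NWord.ncard_setOf_eq_insertIdx_top hn w⟩
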